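/- arXiv:1302.4269 — 4 statements merged into one kernel-verified Lean document; each statement's English description precedes it below -/
import Mathlib

section
/- Let V be a real vector space, let a_par and a_perp be bilinear forms on V, set a := a_par + a_perp, let f : V → ℝ be linear, and let ε be a real number. For φ, q ∈ V set p := φ − ε·q. Then the following two systems are equivalent: (i) the micro–macro system: a_par(p, w) = 0 for all w ∈ V, and a_perp(p, v) + ε·a_perp(q, v) + a_par(q, v) = f(v) for all v ∈ V; (ii) the Asymptotic Preserving system (AP): a(φ, v) + (1−ε)·a_par(q, v) = f(v) for all v ∈ V, and a_par(φ, w) = ε·a_par(q, w) for all w ∈ V. -/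
/-!
Both systems contain the constraint `a_∥(φ, ·) = ε a_∥(q, ·)` (in the micro–macro system in the
form `a_∥(p, ·) = 0`), and under it the remaining equation of either system reduces by
bilinearity to `a_⊥(φ, v) + a_∥(q, v) = f(v)`.
-/

namespace LinearMap.BilinForm

variable {R M : Type*} [CommRing R] [AddCommGroup M] [Module R M]

theorem apply_sub_smul_eq_zero_iff (B : LinearMap.BilinForm R M) (c : R) (x y w : M) :
    B (x - c • y) w = 0 ↔ B x w = c * B y w := by
  simp only [map_sub, map_smul, LinearMap.sub_apply, LinearMap.smul_apply, smul_eq_mul,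
    sub_eq_zero]

theorem apply_sub_smul_add_mul (B : LinearMap.BilinForm R M) (c : R) (x y v : M) :
    B (x - c • y) v + c * B y v = B x v := by
  simp only [map_sub, map_smul, LinearMap.sub_apply, LinearMap.smul_apply, smul_eq_mul,
    sub_add_cancel]

end LinearMap.BilinForm

open LinearMap.BilinForm in
/-- Equivalence of the micro–macro system and the Asymptotic Preserving system
(AP), with `p := φ − ε q` and `a := a_∥ + a_⊥`. -/
theorem micro_macro_iff_AP
    {V : Type*} [AddCommGroup V] [Module ℝ V]
    (a_par a_perp : LinearMap.BilinForm ℝ V) (f : V →ₗ[ℝ] ℝ)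
    (ε : ℝ) (φ q : V) :
    ((∀ w : V, a_par (φ - ε • q) w = 0) ∧
      (∀ v : V, a_perp (φ - ε • q) v + ε * a_perp q v + a_par q v = f v)) ↔
    ((∀ v : V, (a_par φ v + a_perp φ v) + (1 - ε) * a_par q v = f v) ∧
      (∀ w : V, a_par φ w = ε * a_par q w)) := by
  simp_rw [apply_sub_smul_eq_zero_iff, apply_sub_smul_add_mul]
  constructor
  · rintro ⟨h_constraint, h_micro⟩
    refine ⟨fun v => ?_, h_constraint⟩
    rw [h_constraint v, ← h_micro v]
    ring
  · rintro ⟨h_AP, h_constraint⟩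
    refine ⟨h_constraint, fun v => ?_⟩
    rw [← h_AP v, h_constraint v]
    ring
end

section
/- Let V be a real vector space, let a_par, a_perp, s be bilinear forms on V with a_par symmetric and positive semidefinite (a_par(v,v) ≥ 0 for all v) and a_perp positive semidefinite (a_perp(v,v) ≥ 0 for all v), set a := a_par + a_perp, and let ε satisfy 0 < ε ≤ 1. Define the combined bilinear form on V × V by B((φ,q),(v,w)) := a(φ,v) + (1−ε)·a_par(q,v) − a_par(φ,w) + ε·a_par(q,w) + s(q,w). Then for all (φ,q) ∈ V × V one has the coercivity estimate B((φ,q),(φ,q)) ≥ (1/2)·a(φ,φ) + (ε/2)·a_par(q,q) + s(q,q). -/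
/-! Taking `(v, w) = (φ, q)`, the cross terms `(1 - ε) a_∥(q, φ) - a_∥(φ, q)` reduce by symmetry to
`-ε a_∥(φ, q)`, and `ε a_∥(φ, q) ≤ ½ a_∥(φ, φ) + (ε/2) a_∥(q, q)` because the difference is
`(ε/2) a_∥(φ - q, φ - q) + ((1 - ε)/2) a_∥(φ, φ) ≥ 0`. What is left over is `½ a_⊥(φ, φ) ≥ 0`. -/

namespace LinearMap.BilinForm

theorem apply_sub_sub_of_apply_comm {R M : Type*} [CommRing R] [AddCommGroup M] [Module R M]
    (b : LinearMap.BilinForm R M) {x y : M} (hxy : b y x = b x y) :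
    b (x - y) (x - y) = b x x - 2 * b x y + b y y := by
  simp only [map_sub, LinearMap.sub_apply, hxy]
  ring

theorem mul_apply_le_of_apply_comm {R M : Type*} [Field R] [LinearOrder R] [IsStrictOrderedRing R]
    [AddCommGroup M] [Module R M] (b : LinearMap.BilinForm R M) (hb : ∀ v, 0 ≤ b v v)
    {x y : M} (hxy : b y x = b x y) {t : R} (ht0 : 0 ≤ t) (ht1 : t ≤ 1) :
    t * b x y ≤ b x x / 2 + t / 2 * b y y := by
  have hdiff := mul_nonneg ht0 (hb (x - y))
  have hx := mul_nonneg (sub_nonneg.mpr ht1) (hb x)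
  rw [apply_sub_sub_of_apply_comm b hxy] at hdiff
  linarith

end LinearMap.BilinForm

/-- Coercivity of the combined bilinear form `B` of the stabilized AP system:
`B((φ,q),(φ,q)) ≥ (1/2)a(φ,φ) + (ε/2)a_∥(q,q) + s(q,q)`, where
`B((φ,q),(v,w)) = a(φ,v) + (1−ε)a_∥(q,v) − a_∥(φ,w) + ε a_∥(q,w) + s(q,w)`
and `a = a_∥ + a_⊥`. -/
theorem stabilized_AP_coercivity
    {V : Type*} [AddCommGroup V] [Module ℝ V]
    (a_par a_perp s : LinearMap.BilinForm ℝ V)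
    (hsymm : ∀ u v : V, a_par u v = a_par v u)
    (hpar_pos : ∀ v : V, 0 ≤ a_par v v)
    (hperp_pos : ∀ v : V, 0 ≤ a_perp v v)
    (ε : ℝ) (hε0 : 0 < ε) (hε1 : ε ≤ 1) :
    ∀ φ q : V,
      (1 / 2) * (a_par φ φ + a_perp φ φ) + (ε / 2) * a_par q q + s q q ≤
        ((a_par φ φ + a_perp φ φ) + (1 - ε) * a_par q φ)
          + (- a_par φ q + ε * a_par q q + s q q) := by
  intro φ q
  have hcross := LinearMap.BilinForm.mul_apply_le_of_apply_comm a_par hpar_pos (hsymm q φ) hε0.le hε1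
  have hperp := hperp_pos φ
  rw [hsymm q φ]
  linarith
end

section
/- Let V be a real Hilbert space, let a_par, a_perp, s be continuous bilinear forms on V with a_par symmetric and positive semidefinite, a_perp positive semidefinite, a := a_par + a_perp coercive (there is α > 0 with a(v,v) ≥ α‖v‖² for all v), and s coercive (there is β > 0 with s(q,q) ≥ β‖q‖² for all q). Let 0 < ε ≤ 1 and let f : V → ℝ be a continuous linear functional. Then there exists a unique pair (φ, q) ∈ V × V satisfying the stabilized Asymptotic Preserving system: a(φ, v) + (1−ε)·a_par(q, v) = f(v) for all v ∈ V, and a_par(φ, w) = ε·a_par(q, w) + s(q, w) for all w ∈ V. -/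
/-!
Test the system against pairs `(v, w)` and add the two equations, the second one with a minus
sign: this gives one bilinear form `B` on `V × V` (with the `ℓ²` product norm) whose
Lax–Milgram problem is equivalent to the system. For symmetric `a_par` the coupling terms of
`B((φ, q), (φ, q))` collapse to `-ε a_par(φ, q)`, and
`2 a_par(φ, q) ≤ a_par(φ, φ) + a_par(q, q)` together with `ε ≤ 1` and `a_perp(φ, φ) ≥ 0`
bounds it below by `a(φ, φ) / 2 + s(q, q) ≥ α/2 ‖φ‖² + β ‖q‖²`.
-/

open WithLp

theorem ContinuousLinearMap.two_mul_apply_le_add_of_symm_of_nonneg {M : Type*} [AddCommGroup M]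
    [Module ℝ M] [TopologicalSpace M] (a : M →L[ℝ] M →L[ℝ] ℝ) (hsymm : ∀ u v, a u v = a v u)
    (hpos : ∀ v, 0 ≤ a v v) (u v : M) : 2 * a u v ≤ a u u + a v v := by
  have h := hpos (u - v)
  simp only [map_sub, sub_apply, hsymm v u] at h
  linarith

section LaxMilgram

variable {V : Type*} [NormedAddCommGroup V] [InnerProductSpace ℝ V] [CompleteSpace V]
  {B : V →L[ℝ] V →L[ℝ] ℝ}

theorem IsCoercive.existsUnique_apply_eq (coercive : IsCoercive B) (f : V →L[ℝ] ℝ) :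
    ∃! v, ∀ w, B v w = f w := by
  set Φ := coercive.continuousLinearEquivOfBilin
  set z := (InnerProductSpace.toDual ℝ V).symm f
  have key : ∀ v, (∀ w, B v w = f w) ↔ Φ v = z := fun v => by
    simp only [← coercive.continuousLinearEquivOfBilin_apply,
      ← InnerProductSpace.toDual_symm_apply]
    exact ⟨ext_inner_right ℝ, fun h w => h ▸ rfl⟩
  simpa only [key] using Φ.bijective.existsUnique z

end LaxMilgram

section APS

variable {V : Type*} [NormedAddCommGroup V] [InnerProductSpace ℝ V]
  (a_par a_perp s : V →L[ℝ] V →L[ℝ] ℝ) (ε : ℝ)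

noncomputable def apsForm : WithLp 2 (V × V) →L[ℝ] WithLp 2 (V × V) →L[ℝ] ℝ :=
  (a_par + a_perp).bilinearComp (fstL 2 ℝ V V) (fstL 2 ℝ V V)
    + (1 - ε) • a_par.bilinearComp (sndL 2 ℝ V V) (fstL 2 ℝ V V)
    - a_par.bilinearComp (fstL 2 ℝ V V) (sndL 2 ℝ V V)
    + (ε • a_par + s).bilinearComp (sndL 2 ℝ V V) (sndL 2 ℝ V V)

theorem apsForm_apply (x y : WithLp 2 (V × V)) :
    apsForm a_par a_perp s ε x y =
      a_par x.fst y.fst + a_perp x.fst y.fst + (1 - ε) * a_par x.snd y.fst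
        - a_par x.fst y.snd + (ε * a_par x.snd y.snd + s x.snd y.snd) := by
  simp [apsForm]

theorem apsForm_apply_eq_iff (f : V →L[ℝ] ℝ) (x : WithLp 2 (V × V)) :
    (∀ y, apsForm a_par a_perp s ε x y = f y.fst) ↔
      (∀ v, (a_par x.fst v + a_perp x.fst v) + (1 - ε) * a_par x.snd v = f v) ∧
        ∀ w, a_par x.fst w = ε * a_par x.snd w + s x.snd w := by
  simp only [apsForm_apply]
  refine ⟨fun h => ⟨fun v => ?_, fun w => ?_⟩, fun ⟨h₁, h₂⟩ y => ?_⟩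
  · simpa using h (toLp 2 (v, 0))
  · have := h (toLp 2 (0, w))
    simp only [toLp_fst, map_zero, add_zero, mul_zero, toLp_snd, zero_sub] at this
    linarith
  · linarith [h₁ y.fst, h₂ y.snd]

variable {a_par a_perp s ε} in
theorem isCoercive_apsForm (hsymm : ∀ u v, a_par u v = a_par v u)
    (hpar_pos : ∀ v, 0 ≤ a_par v v) (hperp_pos : ∀ v, 0 ≤ a_perp v v) {α : ℝ} (hα : 0 < α)
    (hcoer : ∀ v, α * ‖v‖ ^ 2 ≤ a_par v v + a_perp v v) {β : ℝ} (hβ : 0 < β)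
    (hscoer : ∀ q, β * ‖q‖ ^ 2 ≤ s q q) (hε0 : 0 ≤ ε) (hε1 : ε ≤ 1) :
    IsCoercive (apsForm a_par a_perp s ε) := by
  refine ⟨min (α / 2) β, lt_min (half_pos hα) hβ, fun x => ?_⟩
  set φ := x.fst
  set q := x.snd
  have hcs := a_par.two_mul_apply_le_add_of_symm_of_nonneg hsymm hpar_pos φ q
  have hdiag : a_par φ φ + a_perp φ φ - ε * a_par φ q + ε * a_par q q + s q q
      ≤ apsForm a_par a_perp s ε x x := by
    rw [apsForm_apply, hsymm q φ]; linarith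
  have hlower : α / 2 * ‖φ‖ ^ 2 + β * ‖q‖ ^ 2 ≤ apsForm a_par a_perp s ε x x := by
    linarith [hcoer φ, hscoer q, hperp_pos φ, mul_le_mul_of_nonneg_left hcs hε0,
      mul_nonneg (sub_nonneg.2 hε1) (hpar_pos φ), mul_nonneg hε0 (hpar_pos q)]
  calc min (α / 2) β * ‖x‖ * ‖x‖
        = min (α / 2) β * ‖φ‖ ^ 2 + min (α / 2) β * ‖q‖ ^ 2 := by
          rw [mul_assoc, ← sq, prod_norm_sq_eq_of_L2, mul_add]
    _ ≤ α / 2 * ‖φ‖ ^ 2 + β * ‖q‖ ^ 2 := by gcongr <;> simp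
    _ ≤ _ := hlower

end APS

/-- Existence and uniqueness (via Lax–Milgram) of the solution of the stabilized
Asymptotic Preserving system (APS) in a real Hilbert space. -/
theorem stabilized_AP_existence_uniqueness
    {V : Type*} [NormedAddCommGroup V] [InnerProductSpace ℝ V] [CompleteSpace V]
    (a_par a_perp s : V →L[ℝ] V →L[ℝ] ℝ)
    (hsymm : ∀ u v : V, a_par u v = a_par v u)
    (hpar_pos : ∀ v : V, 0 ≤ a_par v v)
    (hperp_pos : ∀ v : V, 0 ≤ a_perp v v)
    (α : ℝ) (hα : 0 < α)
    (hcoer : ∀ v : V, α * ‖v‖ ^ 2 ≤ a_par v v + a_perp v v)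
    (β : ℝ) (hβ : 0 < β)
    (hscoer : ∀ q : V, β * ‖q‖ ^ 2 ≤ s q q)
    (ε : ℝ) (hε0 : 0 < ε) (hε1 : ε ≤ 1)
    (f : V →L[ℝ] ℝ) :
    ∃! φq : V × V,
      (∀ v : V, (a_par φq.1 v + a_perp φq.1 v) + (1 - ε) * a_par φq.2 v = f v) ∧
      (∀ w : V, a_par φq.1 w = ε * a_par φq.2 w + s φq.2 w) := by
  have hB := isCoercive_apsForm hsymm hpar_pos hperp_pos hα hcoer hβ hscoer hε0.le hε1
  exact (WithLp.equiv 2 (V × V)).existsUnique_congr (apsForm_apply_eq_iff a_par a_perp s ε f)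
    |>.mp (hB.existsUnique_apply_eq (f.comp (fstL 2 ℝ V V)))
end

section
/- Let V be a real vector space, let a_par, a_perp, s be bilinear forms on V with a_par symmetric, set a := a_par + a_perp, let f : V → ℝ be linear, and let ε be a real number. Suppose (φ, q) ∈ V × V satisfies the stabilized AP system: a(φ, v) + (1−ε)·a_par(q, v) = f(v) for all v ∈ V, and a_par(φ, w) = ε·a_par(q, w) + s(q, w) for all w ∈ V. Then for any φ_h, q_h ∈ V, setting e := φ − φ_h and e_q := q − q_h, the following error identity holds: a(e, e) + (1−ε)·ε·a_par(e_q, e_q) + (1−ε)·s(e_q, e_q) = f(e) − a(φ_h, e) − (1−ε)·a_par(q_h, e) + (1−ε)·a_par(φ_h − ε·q_h, e_q) − (1−ε)·s(q_h, e_q). -/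
/-- The residual error equation at the core of Proposition 3.2: with
`a := a_∥ + a_⊥`, `e := φ − φ_h`, `e_q := q − q_h`, and `(φ,q)` solving the
stabilized AP system, one has
`a(e,e) + (1−ε)ε a_∥(e_q,e_q) + (1−ε)s(e_q,e_q)
  = f(e) − a(φ_h,e) − (1−ε)a_∥(q_h,e) + (1−ε)a_∥(φ_h − ε q_h, e_q) − (1−ε)s(q_h,e_q)`. -/
theorem stabilized_AP_residual_error_equation
    {V : Type*} [AddCommGroup V] [Module ℝ V]
    (a_par a_perp s : LinearMap.BilinForm ℝ V)
    (hsymm : ∀ u v : V, a_par u v = a_par v u)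
    (f : V →ₗ[ℝ] ℝ) (ε : ℝ) (φ q : V)
    (h1 : ∀ v : V, (a_par φ v + a_perp φ v) + (1 - ε) * a_par q v = f v)
    (h2 : ∀ w : V, a_par φ w = ε * a_par q w + s q w) :
    ∀ φ_h q_h : V,
      (a_par (φ - φ_h) (φ - φ_h) + a_perp (φ - φ_h) (φ - φ_h))
        + (1 - ε) * ε * a_par (q - q_h) (q - q_h)
        + (1 - ε) * s (q - q_h) (q - q_h)
      = f (φ - φ_h)
        - (a_par φ_h (φ - φ_h) + a_perp φ_h (φ - φ_h))
        - (1 - ε) * a_par q_h (φ - φ_h)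
        + (1 - ε) * a_par (φ_h - ε • q_h) (q - q_h)
        - (1 - ε) * s q_h (q - q_h) := by
  intro φ_h q_h
  have tested_with_e := h1 (φ - φ_h)
  have tested_with_e_q := h2 (q - q_h)
  have cross_term_symm := hsymm (φ - φ_h) (q - q_h)
  simp only [map_sub, LinearMap.sub_apply, map_smul, LinearMap.smul_apply, smul_eq_mul]
    at tested_with_e tested_with_e_q cross_term_symm ⊢
  -- Symmetry of `a_∥` identifies the coupling terms `a_∥(e, e_q)` and `a_∥(e_q, e)`
  -- produced by the two tested equations, which then cancel.
  linear_combination tested_with_e - (1 - ε) * tested_with_e_q + (1 - ε) * cross_term_symm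
end
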